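/- A technical Gaussian computation for the Stein solution. Fix x ∈ ℝ and let N be a standard Gaussian random variable. Let f_x : ℝ → ℝ be defined by f_x(u) = e^{u²/2} ∫_{−∞}^u (1_{(−∞,x]}(a) − Φ(x)) e^{−a²/2} da, where Φ(x) = (2π)^{−1/2} ∫_{−∞}^x e^{−a²/2} da. Then f_x is differentiable on ℝ ∖ {x} and E[f_x'(N)·N] = (1/3)·(x² − 1)·e^{−x²/2}/√(2π), where f_x' denotes the derivative of f_x (defined for almost every u). -/

import Mathlib

/-! With `h(a) = (1_{a ≤ x} − Φ(x)) e^{−a²/2}` and `G(u) = ∫_{−∞}^u h`, we have `f_x = e^{u²/2} G`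
and the Stein equation `f_x'(u) = u f_x(u) + 1_{u ≤ x} − Φ(x)` off `x`, so against the Gaussian
density `E[f_x'(N) N] = (2π)^{−1/2} ∫ (u² G(u) + u h(u)) du`.
Since `∫ h = 0`, `G(u)` is, up to sign, an integral of `h` over the tail `{a : a² ≥ u²}`, so `G`
decays like `e^{−u²/4}`; integrating by parts against `u³/3` then gives `∫ u² G = −⅓ ∫ u³ h`.
The truncated Gaussian moments `∫ u h = −e^{−x²/2}` and `∫ u³ h = −(x² + 2) e^{−x²/2}` come from
the antiderivatives `−e^{−u²/2}` and `−(u² + 2) e^{−u²/2}`. -/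

open MeasureTheory ProbabilityTheory Real Set
open Filter Topology

section ImproperFTC

variable {E : Type*} [NormedAddCommGroup E] [NormedSpace ℝ E]

theorem integral_Iic_of_hasDerivAt_of_integrable [CompleteSpace E] {f f' : ℝ → E} {a : ℝ}
    (hderiv : ∀ u ∈ Iic a, HasDerivAt f (f' u) u) (hf' : IntegrableOn f' (Iic a))
    (hf : IntegrableOn f (Iic a)) : ∫ u in Iic a, f' u = f a := by
  simpa using integral_Iic_of_hasDerivAt_of_tendsto' hderiv hf'
    (tendsto_zero_of_hasDerivAt_of_integrableOn_Iic hderiv hf' hf)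

theorem integral_eq_zero_of_hasDerivAt_off_of_integrable [CompleteSpace E] {f f' : ℝ → E} {c : ℝ}
    (hcont : Continuous f) (hderiv : ∀ u ≠ c, HasDerivAt f (f' u) u) (hf' : Integrable f')
    (hf : Integrable f) : ∫ u, f' u = 0 := by
  have hbot : Tendsto f atBot (𝓝 0) :=
    tendsto_zero_of_hasDerivAt_of_integrableOn_Iic (a := c - 1)
      (fun u hu => hderiv u (by linarith [mem_Iic.1 hu])) hf'.integrableOn hf.integrableOn
  have htop : Tendsto f atTop (𝓝 0) :=
    tendsto_zero_of_hasDerivAt_of_integrableOn_Ioi (a := c)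
      (fun u hu => hderiv u (ne_of_gt hu)) hf'.integrableOn hf.integrableOn
  rw [← intervalIntegral.integral_Iic_add_Ioi hf'.integrableOn hf'.integrableOn,
    integral_Iic_of_hasDerivAt_of_tendsto hcont.continuousWithinAt
      (fun u hu => hderiv u (ne_of_lt hu)) hf'.integrableOn hbot,
    integral_Ioi_of_hasDerivAt_of_tendsto hcont.continuousWithinAt
      (fun u hu => hderiv u (ne_of_gt hu)) hf'.integrableOn htop]
  simp

theorem integral_Iio_eq_add_intervalIntegral {g : ℝ → E} (hg : Integrable g) (u : ℝ) :
    ∫ a in Iio u, g a = (∫ a in Iio 0, g a) + ∫ a in 0..u, g a := by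
  simp only [setIntegral_congr_set Iio_ae_eq_Iic]
  rw [← intervalIntegral.integral_Iic_sub_Iic hg.integrableOn hg.integrableOn]
  abel

theorem continuous_integral_Iio {g : ℝ → E} (hg : Integrable g) :
    Continuous fun u => ∫ a in Iio u, g a := by
  rw [funext (integral_Iio_eq_add_intervalIntegral hg)]
  exact continuous_const.add (intervalIntegral.continuous_primitive
    (fun _ _ => hg.intervalIntegrable) 0)

theorem hasDerivAt_integral_Iio [CompleteSpace E] {g : ℝ → E} {u : ℝ} (hg : Integrable g)
    (hmeas : StronglyMeasurableAtFilter g (𝓝 u)) (hcont : ContinuousAt g u) :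
    HasDerivAt (fun v => ∫ a in Iio v, g a) (g u) u := by
  rw [funext (integral_Iio_eq_add_intervalIntegral hg)]
  exact (intervalIntegral.integral_hasDerivAt_right hg.intervalIntegrable hmeas hcont).const_add _

end ImproperFTC

section GaussianWeight

theorem integrable_pow_mul_exp_neg_sq_div (n : ℕ) {c : ℝ} (hc : 0 < c) :
    Integrable fun u : ℝ => u ^ n * exp (-u ^ 2 / c) := by
  have h := integrable_rpow_mul_exp_neg_mul_sq (inv_pos.2 hc) (s := n)
    (by linarith [n.cast_nonneg (α := ℝ)])
  simp only [rpow_natCast] at h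
  convert h using 4 with u
  rw [neg_div, div_eq_inv_mul, neg_mul]

theorem integrable_exp_neg_sq_div {c : ℝ} (hc : 0 < c) :
    Integrable fun u : ℝ => exp (-u ^ 2 / c) := by
  simpa using integrable_pow_mul_exp_neg_sq_div 0 hc

theorem integral_exp_neg_sq_div (c : ℝ) : ∫ u : ℝ, exp (-u ^ 2 / c) = √(π * c) := by
  convert integral_gaussian c⁻¹ using 3 with u
  · rw [neg_div, div_eq_inv_mul, neg_mul]
  · rw [div_inv_eq_mul]

theorem integrable_pow_mul_of_abs_le_mul_exp_neg_sq_div {g : ℝ → ℝ} {K c : ℝ} (hc : 0 < c)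
    (hg : AEStronglyMeasurable g) (hbound : ∀ u, |g u| ≤ K * exp (-u ^ 2 / c)) (n : ℕ) :
    Integrable fun u => u ^ n * g u := by
  refine ((integrable_pow_mul_exp_neg_sq_div n hc).norm.const_mul K).mono'
    ((continuous_pow n).aestronglyMeasurable.mul hg) (ae_of_all _ fun u => ?_)
  rw [norm_mul, norm_mul, norm_of_nonneg (exp_pos _).le, mul_left_comm]
  exact mul_le_mul_of_nonneg_left (hbound u) (norm_nonneg _)

theorem abs_setIntegral_le_of_sq_le {g : ℝ → ℝ} {s : Set ℝ} {M u : ℝ} (hs : MeasurableSet s)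
    (hg : ∀ a, |g a| ≤ M * exp (-a ^ 2 / 2)) (hsu : ∀ a ∈ s, u ^ 2 ≤ a ^ 2) :
    |∫ a in s, g a| ≤ M * √(π * 4) * exp (-u ^ 2 / 4) := by
  have hM : 0 ≤ M := (mul_nonneg_iff_of_pos_right (exp_pos _)).1 ((abs_nonneg _).trans (hg 0))
  have hdom : Integrable fun a : ℝ => M * exp (-u ^ 2 / 4) * exp (-a ^ 2 / 4) :=
    (integrable_exp_neg_sq_div four_pos).const_mul _
  calc |∫ a in s, g a| ≤ ∫ a in s, M * exp (-u ^ 2 / 4) * exp (-a ^ 2 / 4) := by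
        rw [← Real.norm_eq_abs]
        refine norm_integral_le_of_norm_le hdom.integrableOn
          ((ae_restrict_iff' hs).2 (ae_of_all _ fun a ha => ?_))
        rw [Real.norm_eq_abs]
        refine (hg a).trans ?_
        rw [mul_assoc, ← exp_add]
        gcongr
        linarith [hsu a ha]
    _ ≤ ∫ a, M * exp (-u ^ 2 / 4) * exp (-a ^ 2 / 4) :=
        setIntegral_le_integral hdom (ae_of_all _ fun a => by positivity)
    _ = M * √(π * 4) * exp (-u ^ 2 / 4) := by
        rw [integral_const_mul, integral_exp_neg_sq_div]
        ring

theorem exp_sq_div_two_mul_exp_neg_sq_div_two (u : ℝ) : exp (u ^ 2 / 2) * exp (-u ^ 2 / 2) = 1 := by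
  rw [← exp_add, neg_div, add_neg_cancel, exp_zero]

theorem hasDerivAt_neg_sq_div_two (u : ℝ) : HasDerivAt (fun u : ℝ => -u ^ 2 / 2) (-u) u :=
  ((hasDerivAt_pow 2 u).neg.div_const 2).congr_deriv (by ring)

theorem hasDerivAt_neg_exp_neg_sq_div_two (u : ℝ) :
    HasDerivAt (fun u : ℝ => -exp (-u ^ 2 / 2)) (u * exp (-u ^ 2 / 2)) u :=
  (hasDerivAt_neg_sq_div_two u).exp.neg.congr_deriv (by ring)

theorem hasDerivAt_neg_sq_add_two_mul_exp_neg_sq_div_two (u : ℝ) :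
    HasDerivAt (fun u : ℝ => -(u ^ 2 + 2) * exp (-u ^ 2 / 2)) (u ^ 3 * exp (-u ^ 2 / 2)) u :=
  (((hasDerivAt_pow 2 u).add_const 2).neg.mul (hasDerivAt_neg_sq_div_two u).exp).congr_deriv
    (by simp only [Pi.neg_apply]; push_cast; ring)

theorem integrable_neg_sq_add_two_mul_exp_neg_sq_div_two :
    Integrable fun u : ℝ => -(u ^ 2 + 2) * exp (-u ^ 2 / 2) :=
  ((integrable_pow_mul_exp_neg_sq_div 2 two_pos).add
    ((integrable_exp_neg_sq_div two_pos).const_mul 2)).neg.congr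
    (ae_of_all _ fun u => by simp only [Pi.neg_apply, Pi.add_apply]; ring)

theorem setIntegral_Iic_mul_exp_neg_sq_div_two (x : ℝ) :
    ∫ u in Iic x, u * exp (-u ^ 2 / 2) = -exp (-x ^ 2 / 2) :=
  integral_Iic_of_hasDerivAt_of_integrable (fun u _ => hasDerivAt_neg_exp_neg_sq_div_two u)
    (by simpa using (integrable_pow_mul_exp_neg_sq_div 1 two_pos).integrableOn)
    (integrable_exp_neg_sq_div two_pos).neg.integrableOn

theorem integral_mul_exp_neg_sq_div_two : ∫ u, u * exp (-u ^ 2 / 2) = 0 :=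
  integral_eq_zero_of_hasDerivAt_of_integrable hasDerivAt_neg_exp_neg_sq_div_two
    (by simpa using integrable_pow_mul_exp_neg_sq_div 1 two_pos)
    (integrable_exp_neg_sq_div two_pos).neg

theorem setIntegral_Iic_pow_three_mul_exp_neg_sq_div_two (x : ℝ) :
    ∫ u in Iic x, u ^ 3 * exp (-u ^ 2 / 2) = -(x ^ 2 + 2) * exp (-x ^ 2 / 2) :=
  integral_Iic_of_hasDerivAt_of_integrable
    (fun u _ => hasDerivAt_neg_sq_add_two_mul_exp_neg_sq_div_two u)
    (integrable_pow_mul_exp_neg_sq_div 3 two_pos).integrableOn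
    integrable_neg_sq_add_two_mul_exp_neg_sq_div_two.integrableOn

theorem integral_pow_three_mul_exp_neg_sq_div_two : ∫ u, u ^ 3 * exp (-u ^ 2 / 2) = 0 :=
  integral_eq_zero_of_hasDerivAt_of_integrable hasDerivAt_neg_sq_add_two_mul_exp_neg_sq_div_two
    (integrable_pow_mul_exp_neg_sq_div 3 two_pos) integrable_neg_sq_add_two_mul_exp_neg_sq_div_two

end GaussianWeight

section SteinSolution

noncomputable def stdNormalCDF (x : ℝ) : ℝ := (√(2 * π))⁻¹ * ∫ b in Iic x, exp (-b ^ 2 / 2)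

noncomputable def steinIntegrand (x a : ℝ) : ℝ :=
  ((if a ≤ x then 1 else 0) - stdNormalCDF x) * exp (-a ^ 2 / 2)

noncomputable def steinPrimitive (x u : ℝ) : ℝ := ∫ a in Iio u, steinIntegrand x a

noncomputable def steinSolution (x u : ℝ) : ℝ := exp (u ^ 2 / 2) * steinPrimitive x u

theorem measurable_steinIntegrand (x : ℝ) : Measurable (steinIntegrand x) :=
  ((Measurable.ite measurableSet_Iic measurable_const measurable_const).sub_const _).mul
    (by fun_prop)

theorem abs_steinIntegrand_le (x a : ℝ) :
    |steinIntegrand x a| ≤ (1 + |stdNormalCDF x|) * exp (-a ^ 2 / 2) := by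
  rw [steinIntegrand, abs_mul, abs_of_pos (exp_pos _)]
  gcongr
  refine (abs_sub _ _).trans ?_
  gcongr
  split_ifs <;> simp

theorem integrable_pow_mul_steinIntegrand (x : ℝ) (n : ℕ) :
    Integrable fun u => u ^ n * steinIntegrand x u :=
  integrable_pow_mul_of_abs_le_mul_exp_neg_sq_div two_pos
    (measurable_steinIntegrand x).aestronglyMeasurable (abs_steinIntegrand_le x) n

theorem integrable_steinIntegrand (x : ℝ) : Integrable (steinIntegrand x) := by
  simpa using integrable_pow_mul_steinIntegrand x 0

theorem integral_pow_mul_steinIntegrand (x : ℝ) (n : ℕ) :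
    ∫ u, u ^ n * steinIntegrand x u =
      (∫ u in Iic x, u ^ n * exp (-u ^ 2 / 2)) -
        stdNormalCDF x * ∫ u, u ^ n * exp (-u ^ 2 / 2) := by
  have hint := integrable_pow_mul_exp_neg_sq_div n two_pos
  have hsplit : (fun u => u ^ n * steinIntegrand x u) = fun u =>
      (Iic x).indicator (fun u => u ^ n * exp (-u ^ 2 / 2)) u -
        stdNormalCDF x * (u ^ n * exp (-u ^ 2 / 2)) := by
    ext u
    simp only [steinIntegrand, indicator, mem_Iic]
    split_ifs <;> ring
  rw [hsplit, integral_sub (hint.indicator measurableSet_Iic) (hint.const_mul _),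
    integral_indicator measurableSet_Iic, integral_const_mul]

theorem integral_steinIntegrand (x : ℝ) : ∫ a, steinIntegrand x a = 0 := by
  have hsqrt : √(2 * π) ≠ 0 := (sqrt_pos.2 (by positivity)).ne'
  have h := integral_pow_mul_steinIntegrand x 0
  simp only [pow_zero, one_mul, integral_exp_neg_sq_div, stdNormalCDF] at h
  rw [h, mul_comm π, mul_right_comm, inv_mul_cancel₀ hsqrt, one_mul, sub_self]

theorem integral_mul_steinIntegrand (x : ℝ) :
    ∫ u, u * steinIntegrand x u = -exp (-x ^ 2 / 2) := by
  simpa [setIntegral_Iic_mul_exp_neg_sq_div_two, integral_mul_exp_neg_sq_div_two] using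
    integral_pow_mul_steinIntegrand x 1

theorem integral_pow_three_mul_steinIntegrand (x : ℝ) :
    ∫ u, u ^ 3 * steinIntegrand x u = -(x ^ 2 + 2) * exp (-x ^ 2 / 2) := by
  simpa [setIntegral_Iic_pow_three_mul_exp_neg_sq_div_two,
    integral_pow_three_mul_exp_neg_sq_div_two] using integral_pow_mul_steinIntegrand x 3

theorem continuousAt_steinIntegrand {x u : ℝ} (hu : u ≠ x) :
    ContinuousAt (steinIntegrand x) u := by
  have hind : ContinuousAt (fun a : ℝ => if a ≤ x then (1 : ℝ) else 0) u := by
    rcases hu.lt_or_gt with h | h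
    · exact continuousAt_const.congr
        ((eventually_lt_nhds h).mono fun a ha => (if_pos ha.le).symm)
    · exact continuousAt_const.congr
        ((eventually_gt_nhds h).mono fun a ha => (if_neg (not_le.2 ha)).symm)
  exact (hind.sub continuousAt_const).mul (by fun_prop)

theorem continuous_steinPrimitive (x : ℝ) : Continuous (steinPrimitive x) :=
  continuous_integral_Iio (integrable_steinIntegrand x)

theorem hasDerivAt_steinPrimitive {x u : ℝ} (hu : u ≠ x) :
    HasDerivAt (steinPrimitive x) (steinIntegrand x u) u :=
  hasDerivAt_integral_Iio (integrable_steinIntegrand x)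
    (measurable_steinIntegrand x).stronglyMeasurable.stronglyMeasurableAtFilter
    (continuousAt_steinIntegrand hu)

theorem abs_steinPrimitive_le (x u : ℝ) :
    |steinPrimitive x u| ≤ (1 + |stdNormalCDF x|) * √(π * 4) * exp (-u ^ 2 / 4) := by
  rcases le_or_gt u 0 with hu | hu
  · exact abs_setIntegral_le_of_sq_le measurableSet_Iio (abs_steinIntegrand_le x)
      fun a ha => by nlinarith [mem_Iio.1 ha]
  · have hupper : steinPrimitive x u = -∫ a in Ici u, steinIntegrand x a := by
      rw [steinPrimitive, eq_neg_iff_add_eq_zero, intervalIntegral.integral_Iio_add_Ici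
        (integrable_steinIntegrand x).integrableOn (integrable_steinIntegrand x).integrableOn,
        integral_steinIntegrand]
    rw [hupper, abs_neg]
    exact abs_setIntegral_le_of_sq_le measurableSet_Ici (abs_steinIntegrand_le x)
      fun a ha => by nlinarith [mem_Ici.1 ha]

theorem integrable_pow_mul_steinPrimitive (x : ℝ) (n : ℕ) :
    Integrable fun u => u ^ n * steinPrimitive x u :=
  integrable_pow_mul_of_abs_le_mul_exp_neg_sq_div four_pos
    (continuous_steinPrimitive x).aestronglyMeasurable (abs_steinPrimitive_le x) n

theorem integral_sq_mul_steinPrimitive (x : ℝ) :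
    ∫ u, u ^ 2 * steinPrimitive x u = (x ^ 2 + 2) / 3 * exp (-x ^ 2 / 2) := by
  have hderiv : ∀ u ≠ x, HasDerivAt (fun u => u ^ 3 * steinPrimitive x u / 3)
      (u ^ 2 * steinPrimitive x u + u ^ 3 * steinIntegrand x u / 3) u := fun u hu =>
    (((hasDerivAt_pow 3 u).mul (hasDerivAt_steinPrimitive hu)).div_const 3).congr_deriv
      (by push_cast; ring)
  have hzero := integral_eq_zero_of_hasDerivAt_off_of_integrable
    (((continuous_pow 3).mul (continuous_steinPrimitive x)).div_const 3) hderiv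
    ((integrable_pow_mul_steinPrimitive x 2).add
      ((integrable_pow_mul_steinIntegrand x 3).div_const 3))
    ((integrable_pow_mul_steinPrimitive x 3).div_const 3)
  rw [integral_add (integrable_pow_mul_steinPrimitive x 2)
    ((integrable_pow_mul_steinIntegrand x 3).div_const 3), integral_div,
    integral_pow_three_mul_steinIntegrand] at hzero
  linear_combination hzero

theorem hasDerivAt_steinSolution {x u : ℝ} (hu : u ≠ x) :
    HasDerivAt (steinSolution x)
      (u * steinSolution x u + ((if u ≤ x then 1 else 0) - stdNormalCDF x)) u :=
  (((hasDerivAt_pow 2 u).div_const 2).exp.mul (hasDerivAt_steinPrimitive hu)).congr_deriv (by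
    simp only [steinSolution, steinIntegrand]
    push_cast
    linear_combination ((if u ≤ x then 1 else 0) - stdNormalCDF x) *
      exp_sq_div_two_mul_exp_neg_sq_div_two u)

theorem gaussianPDFReal_zero_one (u : ℝ) :
    gaussianPDFReal 0 1 u = (√(2 * π))⁻¹ * exp (-u ^ 2 / 2) := by
  simp [gaussianPDFReal]

end SteinSolution

theorem stein_solution_fourth_moment_computation (x : ℝ) :
    ∀ fx : ℝ → ℝ,
      (fx = fun u => Real.exp (u ^ 2 / 2) *
        ∫ a in Iio u,
          ((if a ≤ x then (1 : ℝ) else 0) -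
              (Real.sqrt (2 * π))⁻¹ * ∫ b in Iic x, Real.exp (-b ^ 2 / 2)) *
            Real.exp (-a ^ 2 / 2)) →
      (∀ u : ℝ, u ≠ x → DifferentiableAt ℝ fx u) ∧
      ∫ u, deriv fx u * u ∂(gaussianReal 0 1) =
        (1 / 3) * (x ^ 2 - 1) * Real.exp (-x ^ 2 / 2) / Real.sqrt (2 * π) := by
  intro fx hfx
  obtain rfl : fx = steinSolution x := hfx
  refine ⟨fun u hu => (hasDerivAt_steinSolution hu).differentiableAt, ?_⟩
  have hae : ∀ᵐ u, gaussianPDFReal 0 1 u • (deriv (steinSolution x) u * u) =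
      (√(2 * π))⁻¹ * (u ^ 2 * steinPrimitive x u + u * steinIntegrand x u) := by
    filter_upwards [compl_mem_ae_iff.2 (measure_singleton x)] with u hu
    rw [(hasDerivAt_steinSolution hu).deriv, gaussianPDFReal_zero_one, smul_eq_mul,
      steinSolution, steinIntegrand]
    linear_combination (√(2 * π))⁻¹ * u ^ 2 * steinPrimitive x u *
      exp_sq_div_two_mul_exp_neg_sq_div_two u
  rw [integral_gaussianReal_eq_integral_smul one_ne_zero, integral_congr_ae hae,
    integral_const_mul, integral_add (integrable_pow_mul_steinPrimitive x 2)
      (by simpa using integrable_pow_mul_steinIntegrand x 1),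
    integral_sq_mul_steinPrimitive, integral_mul_steinIntegrand]
  ring
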